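/- arXiv:2101.08036 — 2 statements merged into one kernel-verified Lean document; each statement's English description precedes it below -/
import Mathlib

section
/- Mertens' first theorem: there is an absolute constant C such that for all real x ≥ 2, |∑_{p ≤ x, p prime} (log p)/p − log x| ≤ C. -/
open Finset Real

namespace MertensAux

/-- The primes set. -/
noncomputable def P (n : ℕ) : Finset ℕ := (Finset.Icc 1 n).filter Nat.Prime

lemma mem_P {n p : ℕ} (hp : p ∈ P n) : p.Prime ∧ p ≤ n := by
  simp only [P, Finset.mem_filter, Finset.mem_Icc] at hp
  exact ⟨hp.2, hp.1.2⟩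

/-- Legendre / prime factorization of n!. -/
lemma log_factorial_eq (n : ℕ) :
    Real.log (n.factorial : ℝ) = ∑ p ∈ P n, (n.factorial.factorization p : ℝ) * Real.log p := by
  have h0 : n.factorial ≠ 0 := Nat.factorial_ne_zero n
  have hsub : n.factorial.primeFactors ⊆ P n := by
    intro p hp
    rw [Nat.mem_primeFactors] at hp
    have hple : p ≤ n := (Nat.Prime.dvd_factorial hp.1).mp hp.2.1
    simp only [P, Finset.mem_filter, Finset.mem_Icc]
    exact ⟨⟨hp.1.one_lt.le, hple⟩, hp.1⟩
  have hprodN : n.factorial = ∏ p ∈ P n, p ^ n.factorial.factorization p := by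
    have h1 : ∏ p ∈ n.factorial.primeFactors, p ^ n.factorial.factorization p
        = n.factorial :=
      (Nat.prod_factorization_eq_prod_primeFactors
        (n := n.factorial) (fun p k => p ^ k)).symm.trans
        (Nat.factorization_prod_pow_eq_self h0)
    conv_lhs => rw [← h1]
    apply Finset.prod_subset hsub
    intro p hp hnp
    have : n.factorial.factorization p = 0 := by
      rw [← Nat.support_factorization] at hnp
      exact Finsupp.notMem_support_iff.mp hnp
    rw [this, pow_zero]
  conv_lhs => rw [hprodN]
  push_cast
  rw [Real.log_prod]
  · refine Finset.sum_congr rfl fun p hp => ?_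
    rw [Real.log_pow]
  · intro p hp
    have := (mem_P hp).1.pos
    positivity


lemma fact_factorization {n p : ℕ} (hp : p.Prime) :
    n.factorial.factorization p = ∑ i ∈ Finset.Ico 1 (n+1), n / p ^ i := by
  haveI : Fact p.Prime := ⟨hp⟩
  rw [Nat.factorization_def _ hp]
  exact padicValNat_factorial (Nat.lt_succ_of_le (Nat.log_le_self p n))

lemma fact_lower {n p : ℕ} (hp : p ∈ P n) :
    (n : ℝ) / p - 1 ≤ (n.factorial.factorization p : ℝ) := by
  obtain ⟨hpp, hpn⟩ := mem_P hp
  have hp0 : 0 < p := hpp.pos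
  have h1 : n / p ≤ n.factorial.factorization p := by
    rw [fact_factorization hpp]
    have hmem : 1 ∈ Finset.Ico 1 (n + 1) := by
      simp only [Finset.mem_Ico]
      omega
    calc n / p = n / p ^ 1 := by rw [pow_one]
      _ ≤ _ := Finset.single_le_sum (f := fun i => n / p ^ i) (fun i _ => Nat.zero_le _) hmem
  have h2 : n < p * (n / p) + p := by
    have := Nat.div_add_mod n p
    have := Nat.mod_lt n hp0
    omega
  have h2' : (n : ℝ) < p * (n / p : ℕ) + p := by exact_mod_cast h2
  have hp0' : (0 : ℝ) < p := by exact_mod_cast hp0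
  have h3 : (n : ℝ) / p < ((n / p : ℕ) : ℝ) + 1 := by
    rw [div_lt_iff₀ hp0']
    nlinarith
  have h4 : ((n / p : ℕ) : ℝ) ≤ (n.factorial.factorization p : ℝ) := by exact_mod_cast h1
  linarith

lemma fact_upper {n p : ℕ} (hp : p.Prime) :
    (n.factorial.factorization p : ℝ) ≤ (n : ℝ) / (p - 1) := by
  have hp2 : (2 : ℝ) ≤ p := by exact_mod_cast hp.two_le
  have hp0 : (0 : ℝ) < p := by linarith
  have hinv0 : (0 : ℝ) ≤ (p : ℝ)⁻¹ := by positivity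
  have hinv1 : (p : ℝ)⁻¹ < 1 := by
    rw [inv_lt_one_iff₀]; right; linarith
  rw [fact_factorization hp]
  push_cast
  calc (∑ i ∈ Finset.Ico 1 (n+1), ((n / p ^ i : ℕ) : ℝ))
      ≤ ∑ i ∈ Finset.Ico 1 (n+1), (n : ℝ) * ((p : ℝ)⁻¹) ^ i := by
        refine Finset.sum_le_sum fun i _ => ?_
        rw [inv_pow, ← div_eq_mul_inv]
        exact_mod_cast Nat.cast_div_le (m := n) (n := p ^ i) (α := ℝ)
    _ = (n : ℝ) * ∑ i ∈ Finset.Ico 1 (n+1), ((p : ℝ)⁻¹) ^ i := by rw [Finset.mul_sum]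
    _ ≤ (n : ℝ) * (((p : ℝ)⁻¹) ^ 1 / (1 - (p : ℝ)⁻¹)) := by
        refine mul_le_mul_of_nonneg_left ?_ (Nat.cast_nonneg n)
        exact geom_sum_Ico_le_of_lt_one hinv0 hinv1
    _ = (n : ℝ) / (p - 1) := by
        rw [pow_one]
        have h0 : (p : ℝ) ≠ 0 := by linarith
        have h1 : (p : ℝ) - 1 ≠ 0 := by linarith
        field_simp

lemma theta_le (n : ℕ) : ∑ p ∈ P n, Real.log p ≤ (n : ℝ) * Real.log 4 := by
  have hPeq : P n = (Finset.range (n+1)).filter Nat.Prime := by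
    ext p
    simp only [P, Finset.mem_filter, Finset.mem_Icc, Finset.mem_range]
    constructor
    · rintro ⟨⟨h1, h2⟩, h3⟩; exact ⟨by omega, h3⟩
    · rintro ⟨h1, h3⟩; exact ⟨⟨h3.one_lt.le, by omega⟩, h3⟩
  have hpr : ((primorial n : ℕ) : ℝ) = ∏ p ∈ P n, (p : ℝ) := by
    rw [hPeq, primorial]
    push_cast
    rfl
  have h1 : ∑ p ∈ P n, Real.log p = Real.log ((primorial n : ℕ) : ℝ) := by
    rw [hpr, Real.log_prod]
    intro p hp
    have := (mem_P hp).1.pos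
    positivity
  rw [h1]
  have h2 : ((primorial n : ℕ) : ℝ) ≤ ((4 : ℕ) : ℝ) ^ n := by
    exact_mod_cast primorial_le_4_pow n
  calc Real.log ((primorial n : ℕ) : ℝ) ≤ Real.log (((4:ℕ) : ℝ) ^ n) := by
        refine Real.log_le_log (by exact_mod_cast (primorial_pos n)) h2
    _ = (n : ℝ) * Real.log 4 := by rw [Real.log_pow]; norm_num


noncomputable def K : ℝ := 4 * ∑' k : ℕ, 1 / (k : ℝ) ^ (3/2 : ℝ)

lemma term_le {p : ℕ} (hp : p.Prime) :
    Real.log p / (p * ((p : ℝ) - 1)) ≤ 4 * (1 / (p : ℝ) ^ (3/2 : ℝ)) := by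
  have hp2 : (2 : ℝ) ≤ p := by exact_mod_cast hp.two_le
  have hp0 : (0 : ℝ) < p := by linarith
  have hs0 : 0 < Real.sqrt p := Real.sqrt_pos.mpr hp0
  have hs2 : Real.sqrt p ^ 2 = (p : ℝ) := Real.sq_sqrt hp0.le
  have hlog : Real.log p ≤ 2 * Real.sqrt p := by
    have h1 : Real.log (Real.sqrt p) ≤ Real.sqrt p - 1 :=
      Real.log_le_sub_one_of_pos hs0
    have h2 : Real.log (Real.sqrt p) = Real.log p / 2 := Real.log_sqrt hp0.le
    linarith
  have hlog0 : 0 ≤ Real.log p := Real.log_nonneg (by linarith)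
  have hrw : (p : ℝ) ^ (3/2 : ℝ) = Real.sqrt p * p := by
    have h32 : (3/2 : ℝ) = 1/2 + 1 := by norm_num
    rw [Real.sqrt_eq_rpow, h32, Real.rpow_add hp0, Real.rpow_one]
  rw [hrw, mul_one_div, div_le_div_iff₀ (by nlinarith) (by positivity)]
  have hstep : Real.log p * (Real.sqrt p * p) ≤ 2 * Real.sqrt p * (Real.sqrt p * p) :=
    mul_le_mul_of_nonneg_right hlog (by positivity)
  have hsq : 2 * Real.sqrt p * (Real.sqrt p * p) = 2 * ((p:ℝ) * p) := by
    nlinarith [hs2]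
  nlinarith [hstep, hsq, hp2]

lemma sum_term_le (n : ℕ) :
    ∑ p ∈ P n, Real.log p / (p * ((p : ℝ) - 1)) ≤ K := by
  have hsum : Summable (fun k : ℕ => 1 / (k : ℝ) ^ (3/2 : ℝ)) :=
    Real.summable_one_div_nat_rpow.mpr (by norm_num)
  calc ∑ p ∈ P n, Real.log p / (p * ((p : ℝ) - 1))
      ≤ ∑ p ∈ P n, 4 * (1 / (p : ℝ) ^ (3/2 : ℝ)) :=
        Finset.sum_le_sum fun p hp => term_le (mem_P hp).1
    _ = 4 * ∑ p ∈ P n, 1 / (p : ℝ) ^ (3/2 : ℝ) := by rw [Finset.mul_sum]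
    _ ≤ K := by
        refine mul_le_mul_of_nonneg_left ?_ (by norm_num)
        exact Summable.sum_le_tsum (P n) (fun k _ => by positivity) hsum

lemma log_factorial_upper (n : ℕ) :
    Real.log n.factorial ≤ (n : ℝ) * Real.log n := by
  rcases Nat.eq_zero_or_pos n with h | h
  · simp [h]
  have h1 : (n.factorial : ℝ) ≤ (n : ℝ) ^ n := by exact_mod_cast Nat.factorial_le_pow n
  calc Real.log n.factorial ≤ Real.log ((n : ℝ) ^ n) :=
        Real.log_le_log (by exact_mod_cast n.factorial_pos) h1
    _ = (n : ℝ) * Real.log n := by rw [Real.log_pow]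

lemma log_factorial_lower (n : ℕ) :
    (n : ℝ) * Real.log n - n ≤ Real.log n.factorial := by
  have hf0 : (0 : ℝ) < n.factorial := by exact_mod_cast n.factorial_pos
  have key : ((n : ℝ)) ^ n ≤ Real.exp n * n.factorial := by
    have h1 : (n : ℝ) ^ n / n.factorial ≤ Real.exp n := by
      calc (n : ℝ) ^ n / n.factorial
          ≤ ∑ i ∈ Finset.range (n + 1), (n : ℝ) ^ i / i.factorial := by
            refine Finset.single_le_sum (f := fun i => (n : ℝ) ^ i / i.factorial)
              (fun i _ => by positivity) (Finset.self_mem_range_succ n)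
        _ ≤ Real.exp n := Real.sum_le_exp_of_nonneg (Nat.cast_nonneg n) (n + 1)
    calc ((n : ℝ)) ^ n = (n : ℝ) ^ n / n.factorial * n.factorial := by field_simp
      _ ≤ Real.exp n * n.factorial := by
          exact mul_le_mul_of_nonneg_right h1 hf0.le
  rcases Nat.eq_zero_or_pos n with h | h
  · simp [h]
  have h2 : Real.log ((n : ℝ) ^ n) ≤ Real.log (Real.exp n * n.factorial) :=
    Real.log_le_log (by positivity) key
  rw [Real.log_pow, Real.log_mul (Real.exp_ne_zero _) (ne_of_gt hf0),
    Real.log_exp] at h2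
  linarith


lemma K_nonneg : 0 ≤ K := by
  unfold K
  refine mul_nonneg (by norm_num) (tsum_nonneg fun k => by positivity)

lemma mertens_nat (n : ℕ) (hn : 2 ≤ n) :
    |(∑ p ∈ P n, Real.log p / p) - Real.log n| ≤ Real.log 4 + 1 + K := by
  set T := ∑ p ∈ P n, Real.log p / p with hT
  have hn0 : (0 : ℝ) < n := by
    have : (2 : ℝ) ≤ n := by exact_mod_cast hn
    linarith
  have hlogp : ∀ p ∈ P n, 0 ≤ Real.log p := fun p hp =>
    Real.log_nonneg (by exact_mod_cast (mem_P hp).1.one_lt.le)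
  have hL := log_factorial_eq n
  have hmul : (n : ℝ) * T = ∑ p ∈ P n, (n : ℝ) / p * Real.log p := by
    rw [hT, Finset.mul_sum]
    exact Finset.sum_congr rfl fun p _ => by ring
  have hupper : (n : ℝ) * T ≤ Real.log n.factorial + ∑ p ∈ P n, Real.log p := by
    rw [hmul, hL, ← Finset.sum_add_distrib]
    refine Finset.sum_le_sum fun p hp => ?_
    have h1 := fact_lower hp
    have h2 := hlogp p hp
    nlinarith
  have hlower : Real.log n.factorial ≤ (n : ℝ) * T + (n : ℝ) * K := by
    rw [hL]
    have hstep : ∑ p ∈ P n, ((n.factorial.factorization p : ℝ)) * Real.log p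
        ≤ ∑ p ∈ P n, ((n : ℝ) / p * Real.log p
            + (n : ℝ) * (Real.log p / (p * ((p : ℝ) - 1)))) := by
      refine Finset.sum_le_sum fun p hp => ?_
      obtain ⟨hpp, _⟩ := mem_P hp
      have hp2 : (2 : ℝ) ≤ p := by exact_mod_cast hpp.two_le
      have hp0 : (p : ℝ) ≠ 0 := by linarith
      have hp1 : (p : ℝ) - 1 ≠ 0 := by linarith
      have h1 := fact_upper (n := n) hpp
      have h2 := hlogp p hp
      have hid : (n : ℝ) / ((p : ℝ) - 1) * Real.log p
          = (n : ℝ) / p * Real.log p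
            + (n : ℝ) * (Real.log p / (p * ((p : ℝ) - 1))) := by
        field_simp
        ring
      calc ((n.factorial.factorization p : ℝ)) * Real.log p
          ≤ (n : ℝ) / ((p : ℝ) - 1) * Real.log p :=
            mul_le_mul_of_nonneg_right h1 h2
        _ = _ := hid
    have hsplit : ∑ p ∈ P n, ((n : ℝ) / p * Real.log p
            + (n : ℝ) * (Real.log p / (p * ((p : ℝ) - 1))))
        = (n : ℝ) * T + (n : ℝ) * ∑ p ∈ P n, Real.log p / (p * ((p : ℝ) - 1)) := by
      rw [Finset.sum_add_distrib, ← Finset.mul_sum, hmul]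
    have h3 := sum_term_le n
    have h4 : (n : ℝ) * ∑ p ∈ P n, Real.log p / (p * ((p : ℝ) - 1)) ≤ (n : ℝ) * K :=
      mul_le_mul_of_nonneg_left h3 hn0.le
    rw [hsplit] at hstep
    linarith
  have hθ := theta_le n
  have hfu := log_factorial_upper n
  have hfl := log_factorial_lower n
  have e1 : T ≤ Real.log n + Real.log 4 := by
    by_contra hc
    push_neg at hc
    nlinarith
  have e2 : Real.log n - (1 + K) ≤ T := by
    by_contra hc
    push_neg at hc
    nlinarith
  have hlog4 : 0 ≤ Real.log 4 := Real.log_nonneg (by norm_num)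
  refine abs_le.mpr ⟨by linarith [K_nonneg], by linarith [K_nonneg]⟩

end MertensAux

open MertensAux in
/-- Mertens' first theorem. -/
theorem mertens_first :
    ∃ C : ℝ, ∀ x : ℝ, 2 ≤ x →
      |(∑ p ∈ (Finset.Icc 1 ⌊x⌋₊).filter Nat.Prime, Real.log p / p) - Real.log x| ≤ C := by
  refine ⟨Real.log 4 + 1 + K + Real.log 2, fun x hx => ?_⟩
  set n : ℕ := ⌊x⌋₊ with hn
  have hn2 : 2 ≤ n := Nat.le_floor (by exact_mod_cast hx)
  have hx0 : (0 : ℝ) ≤ x := by linarith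
  have h1 : (n : ℝ) ≤ x := Nat.floor_le hx0
  have h2 : x < n + 1 := Nat.lt_floor_add_one x
  have hn0 : (0 : ℝ) < n := by
    have : (2 : ℝ) ≤ n := by exact_mod_cast hn2
    linarith
  have hlog1 : Real.log n ≤ Real.log x := Real.log_le_log hn0 h1
  have hlog2 : Real.log x ≤ Real.log n + Real.log 2 := by
    have hx2n : x ≤ 2 * n := by
      have : (2 : ℝ) ≤ n := by exact_mod_cast hn2
      linarith
    calc Real.log x ≤ Real.log (2 * n) := Real.log_le_log (by linarith) hx2n
      _ = Real.log 2 + Real.log n := Real.log_mul (by norm_num) (ne_of_gt hn0)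
      _ = Real.log n + Real.log 2 := by ring
  have hmain := mertens_nat n hn2
  have hPn : P n = (Finset.Icc 1 ⌊x⌋₊).filter Nat.Prime := rfl
  rw [hPn] at hmain
  set T := ∑ p ∈ (Finset.Icc 1 ⌊x⌋₊).filter Nat.Prime, Real.log p / p
  have habs := abs_le.mp hmain
  refine abs_le.mpr ⟨by linarith [habs.1], by linarith [habs.2, Real.log_nonneg (show (1:ℝ) ≤ 2 by norm_num)]⟩
end

section
/- Suppose a_N and b_N are sequences of real numbers with a_N = (1/4) log N + O(1) and b_N = O(1), and let n be even. Then ∑_{m_1+2m_2+⋯+n m_n = n} n!/(m_1!⋯m_n!) a_N^{m_2} b_N^{m_1+m_3+⋯+m_n} is asymptotic, as N → ∞, to (n!/((n/2)!)) · ((1/4) log N)^{n/2}; if n is odd, the same sum is O((log N)^{(n−1)/2}). -/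
/-!
An admissible tuple has `2 m_2 ≤ m_1 + 2 m_2 + ⋯ + n m_n = n`, with equality only for the tuple
with `m_2 = n / 2` and all other `m_i = 0`. Since `a_N ~ (1/4) log N → ∞` and `b_N = O(1)`, the
term of a tuple is `O((log N)^{m_2})`. For even `n` the equality tuple therefore dominates: it
contributes `n!/(n/2)! · a_N^{n/2}`, and every other term is `o((log N)^{n/2})`. For odd `n` every
tuple has `m_2 ≤ (n - 1)/2`.
-/

open Filter Asymptotics
open scoped Nat

@[to_additive]
lemma Fin.prod_ite_val_eq {n : ℕ} {M : Type*} [CommMonoid M] (c : ℕ) (x : M) :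
    (∏ i : Fin n, if (i : ℕ) = c then x else 1) = if c < n then x else 1 := by
  simp [Fin.prod_univ_eq_prod_range (fun i => if i = c then x else 1)]

namespace Asymptotics

variable {α : Type*} {l : Filter α}

lemma isBigO_one_of_abs_le {f : ℕ → ℝ} {k : ℕ} {C : ℝ}
    (h : ∀ N, k ≤ N → |f N| ≤ C) :
    f =O[atTop] fun _ => (1 : ℝ) :=
  IsBigO.of_bound C (eventually_atTop.2 ⟨k, fun N hN => by simpa using h N hN⟩)

lemma isEquivalent_of_sub_isBigO_one {β : Type*} [NormedAddCommGroup β] {u v : α → β}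
    (h : (u - v) =O[l] fun _ => (1 : ℝ)) (hv : Tendsto (fun x => ‖v x‖) l atTop) : u ~[l] v :=
  h.trans_isLittleO ((isLittleO_one_left_iff ℝ).2 hv)

lemma isLittleO_pow_pow_of_tendsto_atTop {L : α → ℝ} (hL : Tendsto L l atTop) {k q : ℕ}
    (h : k < q) : (fun x => L x ^ k) =o[l] fun x => L x ^ q :=
  (isLittleO_pow_pow_atTop_of_lt h).comp_tendsto hL

lemma isBigO_pow_pow_of_tendsto_atTop {L : α → ℝ} (hL : Tendsto L l atTop) {k q : ℕ}
    (h : k ≤ q) : (fun x => L x ^ k) =O[l] fun x => L x ^ q := by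
  rcases h.lt_or_eq with h | rfl
  · exact (isLittleO_pow_pow_of_tendsto_atTop hL h).isBigO
  · exact isBigO_refl _ _

end Asymptotics

namespace MultinomialSum

variable {n : ℕ}

-- `m i` is the multiplicity `m_{i+1}` of the paper.
def tuples (n : ℕ) : Finset (Fin n → ℕ) :=
  (Finset.Iic fun _ : Fin n => n).filter fun m => ∑ i : Fin n, ((i : ℕ) + 1) * m i = n

def twoCount (m : Fin n → ℕ) : ℕ := ∑ i : Fin n, if (i : ℕ) = 1 then m i else 0

def restCount (m : Fin n → ℕ) : ℕ := ∑ i : Fin n, if (i : ℕ) ≠ 1 then m i else 0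

noncomputable def term (x y : ℝ) (m : Fin n → ℕ) : ℝ :=
  ((n ! : ℝ) / ∏ i : Fin n, ((m i)! : ℝ)) * x ^ twoCount m * y ^ restCount m

def pairTuple (n : ℕ) : Fin n → ℕ := fun i => if (i : ℕ) = 1 then n / 2 else 0

lemma two_mul_twoCount_eq (m : Fin n → ℕ) :
    2 * twoCount m = ∑ i : Fin n, if (i : ℕ) = 1 then ((i : ℕ) + 1) * m i else 0 := by
  rw [twoCount, Finset.mul_sum]
  refine Finset.sum_congr rfl fun i _ => ?_
  split_ifs with hi <;> simp [hi]

lemma two_mul_twoCount_le (m : Fin n → ℕ) :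
    2 * twoCount m ≤ ∑ i : Fin n, ((i : ℕ) + 1) * m i := by
  rw [two_mul_twoCount_eq]
  gcongr with i
  split_ifs <;> simp

lemma eq_zero_of_two_mul_twoCount_eq {m : Fin n → ℕ}
    (h : 2 * twoCount m = ∑ i : Fin n, ((i : ℕ) + 1) * m i) {i : Fin n} (hi : (i : ℕ) ≠ 1) :
    m i = 0 := by
  rw [two_mul_twoCount_eq] at h
  have := (Finset.sum_eq_sum_iff_of_le fun j _ => ?_).1 h i (Finset.mem_univ i)
  · simpa [hi] using this
  · split_ifs <;> simp

lemma two_mul_twoCount_le_of_mem {m : Fin n → ℕ} (hm : m ∈ tuples n) : 2 * twoCount m ≤ n :=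
  (two_mul_twoCount_le m).trans (Finset.mem_filter.1 hm).2.le

lemma twoCount_pairTuple (hn : Even n) : twoCount (pairTuple n) = n / 2 := by
  obtain ⟨k, rfl⟩ := hn
  simp +contextual only [twoCount, pairTuple, ↓reduceIte, Fin.sum_ite_val_eq, ite_eq_left_iff,
    not_lt]
  omega

lemma restCount_pairTuple : restCount (pairTuple n) = 0 :=
  Finset.sum_eq_zero fun i _ => by simp +contextual [pairTuple]

lemma prod_factorial_pairTuple (hn : Even n) :
    ∏ i : Fin n, ((pairTuple n i)! : ℝ) = (n / 2)! := by
  obtain ⟨k, rfl⟩ := hn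
  simp only [pairTuple, apply_ite, Nat.factorial_zero, Nat.cast_one, Fin.prod_ite_val_eq,
    ite_eq_left_iff, not_lt]
  intro hk
  obtain rfl : k = 0 := by omega
  simp

lemma pairTuple_mem_tuples (hn : Even n) : pairTuple n ∈ tuples n := by
  refine Finset.mem_filter.2 ⟨Finset.mem_Iic.2 fun i => ?_, ?_⟩
  · simp only [pairTuple]
    split_ifs <;> omega
  · calc ∑ i : Fin n, ((i : ℕ) + 1) * pairTuple n i = 2 * twoCount (pairTuple n) := by
          rw [two_mul_twoCount_eq]
          refine Finset.sum_congr rfl fun i _ => ?_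
          split_ifs with hi <;> simp [pairTuple, hi]
      _ = n := by rw [twoCount_pairTuple hn, Nat.two_mul_div_two_of_even hn]

lemma eq_pairTuple_of_mem_tuples {m : Fin n → ℕ} (hm : m ∈ tuples n)
    (h : 2 * twoCount m = n) :
    m = pairTuple n := by
  have hsum := h.trans (Finset.mem_filter.1 hm).2.symm
  funext i
  by_cases hi : (i : ℕ) = 1
  · have hval : ∀ j : Fin n, j ≠ i → (j : ℕ) ≠ 1 :=
      fun j hj hj1 => hj (Fin.ext (hj1.trans hi.symm))
    have : twoCount m = m i := by
      rw [twoCount, Fintype.sum_eq_single i fun j hj => if_neg (hval j hj), if_pos hi]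
    simp only [pairTuple, hi, if_true]
    omega
  · simp only [pairTuple, hi, if_false]
    exact eq_zero_of_two_mul_twoCount_eq hsum hi

lemma term_pairTuple (hn : Even n) (x y : ℝ) :
    term x y (pairTuple n) = (n ! / (n / 2)! : ℝ) * x ^ (n / 2) := by
  rw [term, twoCount_pairTuple hn, restCount_pairTuple, prod_factorial_pairTuple hn, pow_zero,
    mul_one]

section

variable {α : Type*} {l : Filter α} {a b L : α → ℝ}

lemma isBigO_term (ha : a =O[l] L) (hb : b =O[l] fun _ => (1 : ℝ)) (m : Fin n → ℕ) :
    (fun x => term (a x) (b x) m) =O[l] fun x => L x ^ twoCount m := by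
  simpa [term, mul_assoc] using ((ha.pow (twoCount m)).mul (hb.pow (restCount m))).const_mul_left
    ((n ! : ℝ) / ∏ i : Fin n, ((m i)! : ℝ))

theorem isEquivalent_sum_term (hn : Even n) (ha : a ~[l] L) (hb : b =O[l] fun _ => (1 : ℝ))
    (hL : Tendsto L l atTop) :
    (fun x => ∑ m ∈ tuples n, term (a x) (b x) m) ~[l]
      fun x => (n ! / (n / 2)! : ℝ) * L x ^ (n / 2) := by
  have hmain : (fun x => term (a x) (b x) (pairTuple n)) ~[l]
      fun x => (n ! / (n / 2)! : ℝ) * L x ^ (n / 2) := by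
    simp only [term_pairTuple hn]
    exact IsEquivalent.refl.mul (ha.pow _)
  have hrest : ∀ m ∈ (tuples n).erase (pairTuple n),
      (fun x => term (a x) (b x) m) =o[l] fun x => (n ! / (n / 2)! : ℝ) * L x ^ (n / 2) := by
    intro m hm
    obtain ⟨hne, hm⟩ := Finset.mem_erase.1 hm
    have hlt : twoCount m < n / 2 := by
      have := two_mul_twoCount_le_of_mem hm
      have := mt (eq_pairTuple_of_mem_tuples hm) hne
      have := Nat.even_iff.1 hn
      omega
    refine (isBigO_term ha.isBigO hb m).trans_isLittleO ?_
    exact (isLittleO_pow_pow_of_tendsto_atTop hL hlt).const_mul_right'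
      (by positivity : (0 : ℝ) < n ! / (n / 2)!).ne'.isUnit
  simp_rw [← Finset.add_sum_erase _ _ (pairTuple_mem_tuples hn)]
  exact hmain.add_isLittleO (IsLittleO.fun_sum hrest)

theorem isBigO_sum_term (hn : Odd n) (ha : a =O[l] L) (hb : b =O[l] fun _ => (1 : ℝ))
    (hL : Tendsto L l atTop) :
    (fun x => ∑ m ∈ tuples n, term (a x) (b x) m) =O[l] fun x => L x ^ ((n - 1) / 2) := by
  refine IsBigO.fun_sum fun m hm => (isBigO_term ha hb m).trans ?_
  refine isBigO_pow_pow_of_tendsto_atTop hL ?_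
  have := two_mul_twoCount_le_of_mem hm
  have := Nat.odd_iff.1 hn
  omega

end

end MultinomialSum

open MultinomialSum in
/-- If `a_N = (1/4) log N + O(1)` and `b_N = O(1)`, then the multinomial sum
`∑_{m_1+2m_2+⋯+nm_n=n} n!/(m_1!⋯m_n!) a_N^{m_2} b_N^{m_1+m_3+⋯+m_n}` is asymptotic to
`(n!/((n/2)!)) ((1/4) log N)^{n/2}` for even `n`, and is `O((log N)^{(n−1)/2})` for odd `n`. -/
theorem multinomial_sum_asymptotic (n : ℕ) (a b : ℕ → ℝ)
    (ha : ∃ C : ℝ, ∀ N : ℕ, 2 ≤ N → |a N - (1 / 4) * Real.log N| ≤ C)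
    (hb : ∃ C : ℝ, ∀ N : ℕ, 2 ≤ N → |b N| ≤ C) :
    (Even n →
      (fun N : ℕ =>
        ∑ m ∈ (Finset.Iic (fun _ : Fin n => n)).filter
            (fun m : Fin n → ℕ => ∑ i : Fin n, ((i : ℕ) + 1) * m i = n),
          ((n.factorial : ℝ) / ∏ i : Fin n, ((m i).factorial : ℝ)) *
            a N ^ (∑ i : Fin n, if (i : ℕ) = 1 then m i else 0) *
            b N ^ (∑ i : Fin n, if (i : ℕ) ≠ 1 then m i else 0))
        ~[atTop]
      (fun N : ℕ =>
        ((n.factorial : ℝ) / ((n / 2).factorial : ℝ)) *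
          ((1 / 4) * Real.log N) ^ (n / 2))) ∧
    (¬ Even n →
      (fun N : ℕ =>
        ∑ m ∈ (Finset.Iic (fun _ : Fin n => n)).filter
            (fun m : Fin n → ℕ => ∑ i : Fin n, ((i : ℕ) + 1) * m i = n),
          ((n.factorial : ℝ) / ∏ i : Fin n, ((m i).factorial : ℝ)) *
            a N ^ (∑ i : Fin n, if (i : ℕ) = 1 then m i else 0) *
            b N ^ (∑ i : Fin n, if (i : ℕ) ≠ 1 then m i else 0))
        =O[atTop]
      (fun N : ℕ => Real.log N ^ ((n - 1) / 2))) := by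
  obtain ⟨Ca, hCa⟩ := ha
  obtain ⟨Cb, hCb⟩ := hb
  have hlog : Tendsto (fun N : ℕ => Real.log N) atTop atTop :=
    Real.tendsto_log_atTop.comp tendsto_natCast_atTop_atTop
  have hL : Tendsto (fun N : ℕ => (1 / 4) * Real.log N) atTop atTop :=
    hlog.const_mul_atTop (by norm_num)
  have haL : a ~[atTop] fun N => (1 / 4) * Real.log N :=
    isEquivalent_of_sub_isBigO_one (isBigO_one_of_abs_le hCa) (tendsto_abs_atTop_atTop.comp hL)
  have hb' := isBigO_one_of_abs_le hCb
  refine ⟨fun hn => isEquivalent_sum_term hn haL hb' hL, fun hn => ?_⟩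
  exact isBigO_sum_term (Nat.not_even_iff_odd.1 hn)
    (haL.isBigO.trans (isBigO_const_mul_self _ _ _)) hb' hlog
end
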